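/- Let T be a tree on a finite set I with n = |I| − 1 internal vertices, fix a nice total order identifying V(T) with {1, …, n}, and let ⊥ = x_0 ⋖ x_1 ⋖ ⋯ ⋖ x_n = ⊤ be the unique maximal chain of Ad(T) with increasing label sequence. For each i ∈ {1, …, n}, the level A_i := { a atom of Ad(T) : a ≤ x_i and a ≰ x_{i−1} } equals B_i := { a atom of Ad(T) : λ(⊥, a) = i }. Equivalently, for every i, { a atom : a ≤ x_i } = { a atom : λ(⊥, a) ∈ {1, …, i} }. -/

import Mathlib

open Finset

/-- A rooted binary tree with leaves labeled in `α`. -/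
inductive BTree (α : Type) : Type where
  | leaf : α → BTree α
  | node : BTree α → BTree α → BTree α

namespace BTree

variable {α : Type} [DecidableEq α]

/-- The list of leaf labels of the tree. -/
def leafList : BTree α → List α
  | .leaf a => [a]
  | .node l r => l.leafList ++ r.leafList

/-- The set of leaf labels of the tree. -/
def leaves (t : BTree α) : Finset α := t.leafList.toFinset

/-- `t` is a tree on the finite set `I`: its leaves are labeled bijectively by `I`. -/
def IsTreeOn (t : BTree α) (I : Finset α) : Prop :=
  t.leafList.Nodup ∧ t.leaves = I

/-- The set `V(t)` of internal vertices of the tree, each internal vertex being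
represented by the set of its ancestor leaves (the leaf labels of the subtree
rooted there).  In this representation a vertex `v` is below a vertex `w` in the
ancestor order (i.e. `w` lies on the path from `v` to the root) exactly when
`v ⊆ w`. -/
def vertexSet : BTree α → Finset (Finset α)
  | .leaf _ => ∅
  | .node l r => insert (l.leaves ∪ r.leaves) (l.vertexSet ∪ r.vertexSet)

/-- The list of internal vertices of the tree, recorded as the pairs
(left subtree, right subtree) hanging at each internal vertex. -/
def nodes : BTree α → List (BTree α × BTree α)
  | .leaf _ => []
  | .node l r => (l, r) :: (l.nodes ++ r.nodes)

/-- `meetVertex t i j` is the internal vertex `v_{(i,j)}` at which the paths from the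
leaves labeled `i` and `j` towards the root first meet (as the set of its ancestor
leaves); meaningful when `i ≠ j` are both leaf labels of `t`. -/
def meetVertex : BTree α → α → α → Finset α
  | .leaf a, _, _ => {a}
  | .node l r, i, j =>
    if i ∈ l.leaves ∧ j ∈ l.leaves then l.meetVertex i j
    else if i ∈ r.leaves ∧ j ∈ r.leaves then r.meetVertex i j
    else l.leaves ∪ r.leaves

/-- `S(J) = { v_{(i,j)} : i, j ∈ J, i ≠ j }`. -/
def S (t : BTree α) (J : Finset α) : Finset (Finset α) :=
  ((J ×ˢ J).filter fun p => p.1 ≠ p.2).image fun p => t.meetVertex p.1 p.2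

/-- A partition `π` of `I` is `T`-admissible when `S(B) ∩ S(B') = ∅` for every pair of
distinct blocks `B, B'` of `π`. -/
def Admissible (t : BTree α) {I : Finset α} (π : Finpartition I) : Prop :=
  ∀ B ∈ π.parts, ∀ C ∈ π.parts, B ≠ C → t.S B ∩ t.S C = ∅

/-- A nice total order on the internal vertices of `T`, encoded by an integer-valued
ranking function: it is injective on `V(T)` and is a linear extension of the ancestor
order (a vertex `v` is below `w`, i.e. `w` is on the path from `v` to the root, iff
`v ⊆ w` in the ancestor-leaves representation). -/
def IsNiceOrder (t : BTree α) (ord : Finset α → ℕ) : Prop :=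
  Set.InjOn ord ↑t.vertexSet ∧
    ∀ v ∈ t.vertexSet, ∀ w ∈ t.vertexSet, v ⊆ w → ord v ≤ ord w

/-- A nice total order identifying `V(T)` with `{1, …, n}`. -/
def IsNiceLabeling (t : BTree α) (n : ℕ) (ord : Finset α → ℕ) : Prop :=
  t.IsNiceOrder ord ∧ t.vertexSet.image ord = Finset.Icc 1 n

end BTree

/-- The poset `Ad(T)` of `T`-admissible partitions of `I`, ordered by refinement
(the order is inherited from the refinement order on `Finpartition I`). -/
def AdPartition {α : Type} [DecidableEq α] (T : BTree α) (I : Finset α) : Type :=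
  {π : Finpartition I // T.Admissible π}

namespace AdPartition

variable {α : Type} [DecidableEq α] {T : BTree α} {I : Finset α}

instance : PartialOrder (AdPartition T I) := Subtype.partialOrder _

/-- The set `V(π)` of internal vertices of a partition: the union of the `S(B)` over
the blocks `B` of `π`. -/
def verts (T : BTree α) {I : Finset α} (π : Finpartition I) : Finset (Finset α) :=
  π.parts.sup fun B => T.S B

/-- The edge label `λ(π, τ)` of a covering relation `π ⋖ τ` in `Ad(T)`: the unique
internal vertex `v` with `V(τ) = V(π) ∪ {v}` (extracted here as the union of the
finset `V(τ) \ V(π)`, which is the singleton `{v}` when `π ⋖ τ`). -/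
def label (T : BTree α) {I : Finset α} (π τ : AdPartition T I) : Finset α :=
  (verts T τ.1 \ verts T π.1).sup id

/-- The label sequence, with respect to a nice order `ord`, of a saturated chain
recorded as a list of consecutive elements. -/
def labelSeq (T : BTree α) {I : Finset α} (ord : Finset α → ℕ)
    (c : List (AdPartition T I)) : List ℕ :=
  (c.zip c.tail).map fun p => ord (label T p.1 p.2)

/-- The atom of `Ad(T)` whose unique doubleton block is `{p, q}`, all other blocks
being singletons. -/
def IsAtomPart (T : BTree α) (I : Finset α) (a : AdPartition T I) (p q : α) : Prop :=
  p ≠ q ∧ a.1.parts = insert {p, q} ((I \ {p, q}).image fun x => ({x} : Finset α))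

end AdPartition

section LatticeGen

variable {P : Type*} [PartialOrder P]

/-- A subset of a partial order closed under existing pairwise joins and meets. -/
def IsLatClosed (D : Set P) : Prop :=
  (∀ x ∈ D, ∀ y ∈ D, ∀ z, IsLUB {x, y} z → z ∈ D) ∧
    (∀ x ∈ D, ∀ y ∈ D, ∀ z, IsGLB {x, y} z → z ∈ D)

/-- The sublattice generated by a subset of a partial order: the smallest subset
containing it that is closed under pairwise joins and meets. -/
def latticeGen (s : Set P) : Set P :=
  ⋂₀ {D : Set P | s ⊆ D ∧ IsLatClosed D}

/-- The subset `D`, with the induced join and meet, is a distributive lattice: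
`x ∧ (y ∨ z) = (x ∧ y) ∨ (x ∧ z)` for all `x, y, z ∈ D`. -/
def IsDistribSet (D : Set P) : Prop :=
  ∀ x ∈ D, ∀ y ∈ D, ∀ z ∈ D,
    ∀ yz, IsLUB {y, z} yz → ∀ w, IsGLB {x, yz} w →
      ∀ xy, IsGLB {x, y} xy → ∀ xz, IsGLB {x, z} xz →
        ∀ u, IsLUB {xy, xz} u → w = u

end LatticeGen

section Aux

namespace BTree

variable {α : Type} [DecidableEq α]

/-- The list of all subtrees of a tree. -/
def subs : BTree α → List (BTree α)
  | .leaf a => [.leaf a]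
  | .node l r => .node l r :: (l.subs ++ r.subs)

lemma self_mem_subs (t : BTree α) : t ∈ t.subs := by
  cases t <;> simp [subs]

lemma leafList_sublist_of_mem_subs {s t : BTree α} (h : s ∈ t.subs) :
    s.leafList.Sublist t.leafList := by
  induction t with
  | leaf a => simp [subs] at h; subst h; rfl
  | node l r ihl ihr =>
    simp only [subs, List.mem_cons, List.mem_append] at h
    rcases h with h | h | h
    · subst h; rfl
    · exact (ihl h).trans (l.leafList.sublist_append_left r.leafList)
    · exact (ihr h).trans (l.leafList.sublist_append_right r.leafList)

lemma leaves_subset_of_mem_subs {s t : BTree α} (h : s ∈ t.subs) :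
    s.leaves ⊆ t.leaves := by
  intro x hx
  simp only [leaves, List.mem_toFinset] at hx ⊢
  exact (leafList_sublist_of_mem_subs h).mem hx

lemma nodup_of_mem_subs {s t : BTree α} (h : s ∈ t.subs) (hnd : t.leafList.Nodup) :
    s.leafList.Nodup :=
  (leafList_sublist_of_mem_subs h).nodup hnd

lemma mem_subs_left {l r t : BTree α} (h : BTree.node l r ∈ t.subs) : l ∈ t.subs := by
  induction t with
  | leaf a => simp [subs] at h
  | node L R ihl ihr =>
    simp only [subs, List.mem_cons, List.mem_append] at h ⊢
    rcases h with h | h | h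
    · cases h; exact Or.inr (Or.inl (by simpa [subs] using l.self_mem_subs))
    · exact Or.inr (Or.inl (ihl h))
    · exact Or.inr (Or.inr (ihr h))

lemma mem_subs_right {l r t : BTree α} (h : BTree.node l r ∈ t.subs) : r ∈ t.subs := by
  induction t with
  | leaf a => simp [subs] at h
  | node L R ihl ihr =>
    simp only [subs, List.mem_cons, List.mem_append] at h ⊢
    rcases h with h | h | h
    · cases h; exact Or.inr (Or.inr (by simpa [subs] using r.self_mem_subs))
    · exact Or.inr (Or.inl (ihl h))
    · exact Or.inr (Or.inr (ihr h))

lemma leaves_node (l r : BTree α) : (BTree.node l r).leaves = l.leaves ∪ r.leaves := by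
  simp [leaves, leafList]

lemma leaves_nonempty (t : BTree α) : t.leaves.Nonempty := by
  induction t with
  | leaf a => exact ⟨a, by simp [leaves, leafList]⟩
  | node l r ihl ihr =>
    obtain ⟨x, hx⟩ := ihl
    exact ⟨x, by rw [leaves_node]; exact Finset.mem_union_left _ hx⟩

lemma disjoint_leaves {l r t : BTree α} (h : BTree.node l r ∈ t.subs)
    (hnd : t.leafList.Nodup) : Disjoint l.leaves r.leaves := by
  have := nodup_of_mem_subs h hnd
  simp only [leafList] at this
  rw [List.nodup_append] at this
  rw [Finset.disjoint_left]
  intro x hx hx'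
  simp only [leaves, List.mem_toFinset] at hx hx'
  exact this.2.2 x hx x hx' rfl

lemma meetVertex_subset_leaves (t : BTree α) (p q : α) :
    t.meetVertex p q ⊆ t.leaves := by
  induction t with
  | leaf a => simp [meetVertex, leaves, leafList]
  | node l r ihl ihr =>
    rw [meetVertex, leaves_node]
    split_ifs with h1 h2
    · exact ihl.trans Finset.subset_union_left
    · exact ihr.trans Finset.subset_union_right
    · exact Finset.Subset.refl _

lemma left_mem_meetVertex {t : BTree α} {p : α} (q : α) (hp : p ∈ t.leaves) :
    p ∈ t.meetVertex p q := by
  induction t with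
  | leaf a =>
    simp only [leaves, leafList, List.toFinset_cons, List.toFinset_nil,
      insert_empty_eq, Finset.mem_singleton] at hp
    simp [meetVertex, hp]
  | node l r ihl ihr =>
    rw [meetVertex]
    split_ifs with h1 h2
    · exact ihl h1.1
    · exact ihr h2.1
    · rwa [leaves_node] at hp

lemma right_mem_meetVertex {t : BTree α} {q : α} (p : α) (hq : q ∈ t.leaves) :
    q ∈ t.meetVertex p q := by
  induction t with
  | leaf a =>
    simp only [leaves, leafList, List.toFinset_cons, List.toFinset_nil,
      insert_empty_eq, Finset.mem_singleton] at hq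
    simp [meetVertex, hq]
  | node l r ihl ihr =>
    rw [meetVertex]
    split_ifs with h1 h2
    · exact ihl h1.2
    · exact ihr h2.2
    · rwa [leaves_node] at hq

lemma mem_vertexSet_of_node_mem_subs {l r t : BTree α} (h : BTree.node l r ∈ t.subs) :
    l.leaves ∪ r.leaves ∈ t.vertexSet := by
  induction t with
  | leaf a => simp [subs] at h
  | node L R ihl ihr =>
    simp only [subs, List.mem_cons, List.mem_append] at h
    rw [vertexSet]
    rcases h with h | h | h
    · cases h; exact Finset.mem_insert_self _ _
    · exact Finset.mem_insert_of_mem (Finset.mem_union_left _ (ihl h))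
    · exact Finset.mem_insert_of_mem (Finset.mem_union_right _ (ihr h))

/-- The meet of two leaves of a subtree can be computed inside the subtree. -/
lemma meetVertex_congr {t : BTree α} (hnd : t.leafList.Nodup) :
    ∀ s ∈ t.subs, ∀ p q : α, p ∈ s.leaves → q ∈ s.leaves →
      t.meetVertex p q = s.meetVertex p q := by
  induction t with
  | leaf a =>
    intro s hs p q hp hq
    simp only [subs, List.mem_singleton] at hs
    subst hs; rfl
  | node L R ihl ihr =>
    intro s hs p q hp hq
    have hndL : L.leafList.Nodup :=
      (L.leafList.sublist_append_left R.leafList).nodup hnd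
    have hndR : R.leafList.Nodup :=
      (L.leafList.sublist_append_right R.leafList).nodup hnd
    have hdisj : Disjoint L.leaves R.leaves :=
      disjoint_leaves (BTree.node L R).self_mem_subs hnd
    simp only [subs, List.mem_cons, List.mem_append] at hs
    rcases hs with hs | hs | hs
    · subst hs; rfl
    · have hpL : p ∈ L.leaves := leaves_subset_of_mem_subs hs hp
      have hqL : q ∈ L.leaves := leaves_subset_of_mem_subs hs hq
      rw [meetVertex, if_pos ⟨hpL, hqL⟩]
      exact ihl hndL s hs p q hp hq
    · have hpR : p ∈ R.leaves := leaves_subset_of_mem_subs hs hp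
      have hqR : q ∈ R.leaves := leaves_subset_of_mem_subs hs hq
      have hpL : p ∉ L.leaves := Finset.disjoint_right.mp hdisj hpR
      rw [meetVertex, if_neg (by tauto), if_pos ⟨hpR, hqR⟩]
      exact ihr hndR s hs p q hp hq

/-- Decomposition of the meet vertex: it is realized at a node of the tree with the two
leaves on opposite sides. -/
lemma meetVertex_decomp {t : BTree α} (hnd : t.leafList.Nodup) {p q : α}
    (hp : p ∈ t.leaves) (hq : q ∈ t.leaves) (hpq : p ≠ q) :
    ∃ l r : BTree α, BTree.node l r ∈ t.subs ∧
      t.meetVertex p q = l.leaves ∪ r.leaves ∧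
      ((p ∈ l.leaves ∧ q ∈ r.leaves) ∨ (p ∈ r.leaves ∧ q ∈ l.leaves)) := by
  induction t with
  | leaf a =>
    exfalso
    simp only [leaves, leafList, List.toFinset_cons, List.toFinset_nil,
      insert_empty_eq, Finset.mem_singleton] at hp hq
    exact hpq (hp.trans hq.symm)
  | node L R ihl ihr =>
    have hndL : L.leafList.Nodup :=
      (L.leafList.sublist_append_left R.leafList).nodup hnd
    have hndR : R.leafList.Nodup :=
      (L.leafList.sublist_append_right R.leafList).nodup hnd
    rw [leaves_node, Finset.mem_union] at hp hq
    by_cases h1 : p ∈ L.leaves ∧ q ∈ L.leaves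
    · obtain ⟨l, r, hlr, hmeet, hside⟩ := ihl hndL h1.1 h1.2
      refine ⟨l, r, ?_, ?_, hside⟩
      · simp only [subs, List.mem_cons, List.mem_append]; exact Or.inr (Or.inl hlr)
      · rw [meetVertex, if_pos h1]; exact hmeet
    · by_cases h2 : p ∈ R.leaves ∧ q ∈ R.leaves
      · obtain ⟨l, r, hlr, hmeet, hside⟩ := ihr hndR h2.1 h2.2
        refine ⟨l, r, ?_, ?_, hside⟩
        · simp only [subs, List.mem_cons, List.mem_append]; exact Or.inr (Or.inr hlr)
        · rw [meetVertex, if_neg h1, if_pos h2]; exact hmeet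
      · refine ⟨L, R, (BTree.node L R).self_mem_subs, ?_, ?_⟩
        · rw [meetVertex, if_neg h1, if_neg h2]
        · rcases hp with hp | hp
          · rcases hq with hq | hq
            · exact absurd ⟨hp, hq⟩ h1
            · exact Or.inl ⟨hp, hq⟩
          · rcases hq with hq | hq
            · exact Or.inr ⟨hp, hq⟩
            · exact absurd ⟨hp, hq⟩ h2

lemma meetVertex_mem_vertexSet {t : BTree α} (hnd : t.leafList.Nodup) {p q : α}
    (hp : p ∈ t.leaves) (hq : q ∈ t.leaves) (hpq : p ≠ q) :
    t.meetVertex p q ∈ t.vertexSet := by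
  obtain ⟨l, r, hlr, hmeet, _⟩ := meetVertex_decomp hnd hp hq hpq
  rw [hmeet]
  exact mem_vertexSet_of_node_mem_subs hlr

end BTree

namespace AdPartition

variable {α : Type} [DecidableEq α] {T : BTree α} {I : Finset α}

lemma mem_verts_iff {π : Finpartition I} {v : Finset α} :
    v ∈ verts T π ↔ ∃ B ∈ π.parts, ∃ i ∈ B, ∃ j ∈ B, i ≠ j ∧ T.meetVertex i j = v := by
  simp only [verts, Finset.mem_sup, BTree.S, Finset.mem_image, Finset.mem_filter,
    Finset.mem_product]
  constructor
  · rintro ⟨B, hB, ⟨i, j⟩, ⟨⟨hi, hj⟩, hij⟩, hv⟩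
    exact ⟨B, hB, i, hi, j, hj, hij, hv⟩
  · rintro ⟨B, hB, i, hi, j, hj, hij, hv⟩
    exact ⟨B, hB, ⟨i, j⟩, ⟨⟨hi, hj⟩, hij⟩, hv⟩

/-- Key lemma: if `V(π)` is a lower set in the ancestor order, then two leaves lie in
the same block of `π` iff their meet vertex belongs to `V(π)`. -/
lemma meetVertex_mem_verts_iff (hT : T.IsTreeOn I) (π : Finpartition I)
    (hlow : ∀ v ∈ T.vertexSet, ∀ w ∈ verts T π, v ⊆ w → v ∈ verts T π)
    {p q : α} (hp : p ∈ I) (hq : q ∈ I) (hpq : p ≠ q) :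
    T.meetVertex p q ∈ verts T π ↔ ∃ B ∈ π.parts, p ∈ B ∧ q ∈ B := by
  obtain ⟨hnd, hleaves⟩ := hT
  constructor
  · -- strong induction on the cardinality of the meet vertex
    have main : ∀ k : ℕ, ∀ p q : α, p ∈ I → q ∈ I → p ≠ q →
        (T.meetVertex p q).card ≤ k → T.meetVertex p q ∈ verts T π →
        ∃ B ∈ π.parts, p ∈ B ∧ q ∈ B := by
      intro k
      induction k with
      | zero =>
        intro p q hp hq hpq hcard _
        exfalso
        have : p ∈ T.meetVertex p q := T.left_mem_meetVertex q (hleaves ▸ hp)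
        have := Finset.card_pos.mpr ⟨p, this⟩
        omega
      | succ k ih =>
        intro p q hp hq hpq hcard hmem
        obtain ⟨B, hB, i', hi', j', hj', hij', hv⟩ := mem_verts_iff.mp hmem
        obtain ⟨l, r, hlr, hmeet, hside⟩ :=
          BTree.meetVertex_decomp hnd (hleaves ▸ hp) (hleaves ▸ hq) hpq
        have hlI : l.leaves ⊆ I := hleaves ▸
          (BTree.leaves_subset_of_mem_subs (BTree.mem_subs_left hlr))
        have hrI : r.leaves ⊆ I := hleaves ▸
          (BTree.leaves_subset_of_mem_subs (BTree.mem_subs_right hlr))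
        have hdisj : Disjoint l.leaves r.leaves := BTree.disjoint_leaves hlr hnd
        have hlsub : l ∈ T.subs := BTree.mem_subs_left hlr
        have hrsub : r ∈ T.subs := BTree.mem_subs_right hlr
        have hlv : l.leaves ⊂ T.meetVertex p q := by
          rw [hmeet]
          obtain ⟨x, hx⟩ := r.leaves_nonempty
          refine Finset.ssubset_iff_of_subset Finset.subset_union_left |>.mpr
            ⟨x, Finset.mem_union_right _ hx, fun hc => Finset.disjoint_left.mp hdisj hc hx⟩
        have hrv : r.leaves ⊂ T.meetVertex p q := by
          rw [hmeet]
          obtain ⟨x, hx⟩ := l.leaves_nonempty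
          refine Finset.ssubset_iff_of_subset Finset.subset_union_right |>.mpr
            ⟨x, Finset.mem_union_left _ hx, fun hc => Finset.disjoint_left.mp hdisj hx hc⟩
        -- helper: inside a proper subtree, membership in a block propagates
        have H : ∀ s : BTree α, s ∈ T.subs → s.leaves ⊂ T.meetVertex p q →
            ∀ a b : α, a ∈ s.leaves → b ∈ s.leaves →
            ∀ C ∈ π.parts, b ∈ C → a ∈ C := by
          intro s hs hsv a b ha hb C hC hbC
          by_cases hab : a = b
          · exact hab ▸ hbC
          · have haI : a ∈ I := hleaves ▸ BTree.leaves_subset_of_mem_subs hs ha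
            have hbI : b ∈ I := hleaves ▸ BTree.leaves_subset_of_mem_subs hs hb
            have hcongr : T.meetVertex a b = s.meetVertex a b :=
              BTree.meetVertex_congr hnd s hs a b ha hb
            have hsub : T.meetVertex a b ⊆ s.leaves :=
              hcongr ▸ s.meetVertex_subset_leaves a b
            have hmemV : T.meetVertex a b ∈ T.vertexSet :=
              BTree.meetVertex_mem_vertexSet hnd (hleaves ▸ haI) (hleaves ▸ hbI) hab
            have habverts : T.meetVertex a b ∈ verts T π :=
              hlow _ hmemV _ hmem (hsub.trans hsv.subset)
            have hcard' : (T.meetVertex a b).card ≤ k := by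
              have h1 : (T.meetVertex a b).card ≤ s.leaves.card :=
                Finset.card_le_card hsub
              have h2 : s.leaves.card < (T.meetVertex p q).card :=
                Finset.card_lt_card hsv
              omega
            obtain ⟨C', hC', haC', hbC'⟩ := ih a b haI hbI hab hcard' habverts
            have : C' = C := π.eq_of_mem_parts hC' hC hbC' hbC
            exact this ▸ haC'
        -- locate i' and j' relative to l and r
        have hi'v : i' ∈ T.meetVertex p q := hv ▸ T.left_mem_meetVertex j'
          (hleaves ▸ (π.le hB hi'))
        have hj'v : j' ∈ T.meetVertex p q := hv ▸ T.right_mem_meetVertex i'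
          (hleaves ▸ (π.le hB hj'))
        have hnotl : ¬(i' ∈ l.leaves ∧ j' ∈ l.leaves) := by
          rintro ⟨h1, h2⟩
          have : T.meetVertex i' j' ⊆ l.leaves := by
            rw [BTree.meetVertex_congr hnd l hlsub i' j' h1 h2]
            exact l.meetVertex_subset_leaves i' j'
          rw [hv] at this
          exact hlv.not_subset this
        have hnotr : ¬(i' ∈ r.leaves ∧ j' ∈ r.leaves) := by
          rintro ⟨h1, h2⟩
          have : T.meetVertex i' j' ⊆ r.leaves := by
            rw [BTree.meetVertex_congr hnd r hrsub i' j' h1 h2]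
            exact r.meetVertex_subset_leaves i' j'
          rw [hv] at this
          exact hrv.not_subset this
        rw [hmeet, Finset.mem_union] at hi'v hj'v
        have hside' : (i' ∈ l.leaves ∧ j' ∈ r.leaves) ∨ (i' ∈ r.leaves ∧ j' ∈ l.leaves) := by
          rcases hi'v with h1 | h1
          · rcases hj'v with h2 | h2
            · exact absurd ⟨h1, h2⟩ hnotl
            · exact Or.inl ⟨h1, h2⟩
          · rcases hj'v with h2 | h2
            · exact Or.inr ⟨h1, h2⟩
            · exact absurd ⟨h1, h2⟩ hnotr
        rcases hside with ⟨hpl, hqr⟩ | ⟨hpr, hql⟩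
        · rcases hside' with ⟨h1, h2⟩ | ⟨h1, h2⟩
          · exact ⟨B, hB, H l hlsub hlv p i' hpl h1 B hB hi',
              H r hrsub hrv q j' hqr h2 B hB hj'⟩
          · exact ⟨B, hB, H l hlsub hlv p j' hpl h2 B hB hj',
              H r hrsub hrv q i' hqr h1 B hB hi'⟩
        · rcases hside' with ⟨h1, h2⟩ | ⟨h1, h2⟩
          · exact ⟨B, hB, H r hrsub hrv p j' hpr h2 B hB hj',
              H l hlsub hlv q i' hql h1 B hB hi'⟩
          · exact ⟨B, hB, H r hrsub hrv p i' hpr h1 B hB hi',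
              H l hlsub hlv q j' hql h2 B hB hj'⟩
    exact fun hmem => main (T.meetVertex p q).card p q hp hq hpq le_rfl hmem
  · rintro ⟨B, hB, hpB, hqB⟩
    exact mem_verts_iff.mpr ⟨B, hB, p, hpB, q, hqB, hpq, rfl⟩

lemma verts_subset_vertexSet (hT : T.IsTreeOn I) (π : Finpartition I) :
    verts T π ⊆ T.vertexSet := by
  intro w hw
  obtain ⟨B, hB, i, hi, j, hj, hij, rfl⟩ := mem_verts_iff.mp hw
  exact BTree.meetVertex_mem_vertexSet hT.1 (hT.2.symm ▸ π.le hB hi)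
    (hT.2.symm ▸ π.le hB hj) hij

end AdPartition

end Aux

/-- with `⊥ = x_0 ⋖ x_1 ⋖ ⋯ ⋖ x_n = ⊤` the unique increasing maximal
chain of `Ad(T)`, the level `A_i` (atoms below `x_i` but not below `x_{i−1}`) equals
`B_i` (atoms with label `i`); equivalently an atom is below `x_i` iff its label lies
in `{1, …, i}`. -/
theorem stmt12 {α : Type} [DecidableEq α] (I : Finset α) (T : BTree α)
    (hT : T.IsTreeOn I) (n : ℕ) (hn : I.card = n + 1)
    (ord : Finset α → ℕ) (hord : T.IsNiceLabeling n ord)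
    (x : Fin (n + 1) → AdPartition T I)
    (hx0 : (x 0).1.parts = I.image (fun i => ({i} : Finset α)))
    (hxc : ∀ r : Fin n, x r.castSucc ⋖ x r.succ)
    (hxtop : (x (Fin.last n)).1.parts = {I})
    (hxV : ∀ i : Fin (n + 1),
      (AdPartition.verts T (x i).1).image ord = Finset.Icc 1 (i : ℕ))
    (i : ℕ) (hi1 : 1 ≤ i) (hin : i ≤ n)
    (a : AdPartition T I) (p q : α) (ha : AdPartition.IsAtomPart T I a p q) :
    ((a ≤ x ⟨i, by omega⟩ ∧ ¬ a ≤ x ⟨i - 1, by omega⟩) ↔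
        ord (T.meetVertex p q) = i) ∧
    (a ≤ x ⟨i, by omega⟩ ↔ ord (T.meetVertex p q) ∈ Finset.Icc 1 i) := by
  obtain ⟨⟨hinj, hmono⟩, himg⟩ := hord
  obtain ⟨hpq, hparts⟩ := ha
  have hpqI : {p, q} ⊆ I := by
    have : ({p, q} : Finset α) ∈ a.1.parts := hparts ▸ Finset.mem_insert_self _ _
    exact a.1.le this
  have hpI : p ∈ I := hpqI (Finset.mem_insert_self _ _)
  have hqI : q ∈ I := hpqI (Finset.mem_insert_of_mem (Finset.mem_singleton_self _))
  have hvV : T.meetVertex p q ∈ T.vertexSet :=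
    BTree.meetVertex_mem_vertexSet hT.1 (hT.2.symm ▸ hpI) (hT.2.symm ▸ hqI) hpq
  have hvIcc : ord (T.meetVertex p q) ∈ Finset.Icc 1 n := by
    rw [← himg]; exact Finset.mem_image_of_mem ord hvV
  rw [Finset.mem_Icc] at hvIcc
  -- the key equivalence, for every level j
  have E : ∀ j : ℕ, ∀ hj : j ≤ n,
      (a ≤ x ⟨j, Nat.lt_succ_of_le hj⟩ ↔ ord (T.meetVertex p q) ∈ Finset.Icc 1 j) := by
    intro j hj
    set π := (x ⟨j, Nat.lt_succ_of_le hj⟩).1 with hπ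
    have hV := hxV ⟨j, Nat.lt_succ_of_le hj⟩
    have hvertsub : AdPartition.verts T π ⊆ T.vertexSet :=
      AdPartition.verts_subset_vertexSet hT π
    have hlow : ∀ v ∈ T.vertexSet, ∀ w ∈ AdPartition.verts T π, v ⊆ w →
        v ∈ AdPartition.verts T π := by
      intro v hv w hw hvw
      have hwV : w ∈ T.vertexSet := hvertsub hw
      have hordw : ord w ∈ Finset.Icc 1 (j : ℕ) := by
        rw [← hV]; exact Finset.mem_image_of_mem ord hw
      have hordv1 : 1 ≤ ord v := by
        have : ord v ∈ Finset.Icc 1 n := by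
          rw [← himg]; exact Finset.mem_image_of_mem ord hv
        exact (Finset.mem_Icc.mp this).1
      have hordv : ord v ∈ Finset.Icc 1 (j : ℕ) := by
        rw [Finset.mem_Icc] at hordw ⊢
        exact ⟨hordv1, (hmono v hv w hwV hvw).trans hordw.2⟩
      rw [← hV] at hordv
      obtain ⟨u, hu, huv⟩ := Finset.mem_image.mp hordv
      rwa [← hinj (hvertsub hu) hv huv]
    have hmm : T.meetVertex p q ∈ AdPartition.verts T π ↔ ∃ B ∈ π.parts, p ∈ B ∧ q ∈ B :=
      AdPartition.meetVertex_mem_verts_iff hT π hlow hpI hqI hpq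
    constructor
    · intro hle
      have hle' : a.1 ≤ π := hle
      have hmem : ({p, q} : Finset α) ∈ a.1.parts := hparts ▸ Finset.mem_insert_self _ _
      obtain ⟨C, hC, hsub⟩ := hle' hmem
      have hpqC : p ∈ C ∧ q ∈ C :=
        ⟨hsub (Finset.mem_insert_self _ _),
         hsub (Finset.mem_insert_of_mem (Finset.mem_singleton_self _))⟩
      have : T.meetVertex p q ∈ AdPartition.verts T π := hmm.mpr ⟨C, hC, hpqC.1, hpqC.2⟩
      rw [← hV]
      exact Finset.mem_image_of_mem ord this
    · intro hord'
      rw [← hV] at hord'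
      obtain ⟨u, hu, huv⟩ := Finset.mem_image.mp hord'
      have huV : u = T.meetVertex p q := hinj (hvertsub hu) hvV huv
      obtain ⟨B, hB, hpB, hqB⟩ := hmm.mp (huV ▸ hu)
      show a.1 ≤ π
      intro b hb
      rw [hparts, Finset.mem_insert] at hb
      rcases hb with rfl | hb
      · exact ⟨B, hB, Finset.insert_subset hpB (Finset.singleton_subset_iff.mpr hqB)⟩
      · obtain ⟨y, hy, rfl⟩ := Finset.mem_image.mp hb
        have hyI : y ∈ I := (Finset.mem_sdiff.mp hy).1
        obtain ⟨C, hC, hyC⟩ := π.exists_mem hyI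
        exact ⟨C, hC, Finset.singleton_subset_iff.mpr hyC⟩
  have E1 := E i hin
  have E2 := E (i - 1) (by omega)
  constructor
  · rw [E1, E2, Finset.mem_Icc, Finset.mem_Icc]
    omega
  · exact E1
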